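/- Decomposition of the linearized Ginzburg–Landau operator: let Ω ⊆ ℝⁿ be open, ε > 0, let u, φ : Ω → ℂ and A, ω : Ω → ℝⁿ all be C². Then at every point of Ω the Gateaux derivative (d/ds)|_{s=0} S_ε(u + sφ, A + sω) equals L_W[Φ] − Θ_W[Θ_W*[Φ]], where W = (u,A), Φ = (φ,ω), Θ_W[γ] = (iuγ, ∇γ), Θ_W*[Φ] = −ε² div ω + ⟨φ, iu⟩, and L_W[Φ] has components L_W¹[Φ] = −ε² Σⱼ ∂ⱼ^A(∂ⱼ^A φ) − ½(1−3|u|²)φ + 2iε² Σⱼ (∂ⱼ^A u) ωⱼ and (L_W²[Φ])ₖ = −ε² Δωₖ + |u|² ωₖ + 2⟨i ∂ₖ^A u, φ⟩ for k = 1,…,n. -/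

import Mathlib

/-!
Along the line `s ↦ (u + sφ, A + sω)` every term of `S_ε` is a polynomial in `s`: the covariant
derivative is affine in the potential, `∂ⱼ^{A+sω} v = ∂ⱼ^A v − i s ωⱼ v`, and linear in the field.
So each derivative at `s = 0` is read off from an expansion `f s = f 0 + s • g s` with `g`
continuous; for `∂ⱼ^{A+sω}∂ⱼ^{A+sω}(u + sφ)` one applies `∂ⱼ^A` to the expansion of the inner
covariant derivative, which holds on a neighbourhood of the point.
The result is rearranged into `L_W − Θ_W Θ_W*` using, in the first component, the decomposition
`|u|² φ = ⟨φ,u⟩ u + ⟨φ,iu⟩ iu` of `φ` in the real frame `u, iu`, and in the second, symmetry of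
second derivatives, which turns `Σⱼ ∂ⱼ∂ₖωⱼ` into `∂ₖ div ω`.
-/

open Complex

noncomputable section

/-- Partial derivative in the `j`-th coordinate direction. -/
def pd {n : ℕ} {E : Type*} [NormedAddCommGroup E] [NormedSpace ℝ E]
    (j : Fin n) (f : (Fin n → ℝ) → E) (x : Fin n → ℝ) : E :=
  fderiv ℝ f x (Pi.single j 1)

/-- Covariant partial derivative `∂ⱼ^A u = ∂ⱼu − iAⱼu`. -/
def covD {n : ℕ} (j : Fin n) (A : (Fin n → ℝ) → Fin n → ℝ)
    (u : (Fin n → ℝ) → ℂ) (x : Fin n → ℝ) : ℂ :=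
  pd j u x - Complex.I * (A x j : ℂ) * u x

/-- Real pairing `⟨v,w⟩ = Re (v * conj w)`. -/
def rpair (v w : ℂ) : ℝ := (v * (starRingEnd ℂ) w).re

/-- `S_ε¹(u,A) = −ε² Σⱼ ∂ⱼ^A(∂ⱼ^A u) − ½(1−|u|²)u`. -/
def GL1 {n : ℕ} (ε : ℝ) (u : (Fin n → ℝ) → ℂ) (A : (Fin n → ℝ) → Fin n → ℝ)
    (x : Fin n → ℝ) : ℂ :=
  -(ε : ℂ) ^ 2 * ∑ j : Fin n, covD j A (covD j A u) x
    - (1 / 2 : ℂ) * ((1 - Complex.normSq (u x) : ℝ) : ℂ) * u x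

/-- `(S_ε²(u,A))ₖ = −ε² Σⱼ ∂ⱼ(∂ⱼAₖ − ∂ₖAⱼ) − ⟨∂ₖ^A u, iu⟩`. -/
def GL2 {n : ℕ} (ε : ℝ) (u : (Fin n → ℝ) → ℂ) (A : (Fin n → ℝ) → Fin n → ℝ)
    (x : Fin n → ℝ) (k : Fin n) : ℝ :=
  -ε ^ 2 * ∑ j : Fin n,
      pd j (fun y => pd j (fun w => A w k) y - pd k (fun w => A w j) y) x
    - rpair (covD k A u x) (Complex.I * u x)

/-- `Θ_W*[Φ] = −ε² div ω + ⟨φ, iu⟩`. -/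
def thetaStar {n : ℕ} (ε : ℝ) (u : (Fin n → ℝ) → ℂ) (φ : (Fin n → ℝ) → ℂ)
    (ω : (Fin n → ℝ) → Fin n → ℝ) (x : Fin n → ℝ) : ℝ :=
  -ε ^ 2 * ∑ j : Fin n, pd j (fun w => ω w j) x + rpair (φ x) (Complex.I * u x)

open Filter Topology ComplexConjugate

section

variable {n : ℕ} {E : Type*} [NormedAddCommGroup E] [NormedSpace ℝ E]
  {F : Type*} [NormedAddCommGroup F] [NormedSpace ℝ F] {j : Fin n} {x : Fin n → ℝ}

lemma pd_congr {f g : (Fin n → ℝ) → E} (h : f =ᶠ[𝓝 x] g) : pd j f x = pd j g x := by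
  simp [pd, h.fderiv_eq]

lemma pd_add {f g : (Fin n → ℝ) → E} (hf : DifferentiableAt ℝ f x)
    (hg : DifferentiableAt ℝ g x) : pd j (fun y => f y + g y) x = pd j f x + pd j g x := by
  simp [pd, fderiv_fun_add hf hg]

lemma pd_sub {f g : (Fin n → ℝ) → E} (hf : DifferentiableAt ℝ f x)
    (hg : DifferentiableAt ℝ g x) : pd j (fun y => f y - g y) x = pd j f x - pd j g x := by
  simp [pd, fderiv_fun_sub hf hg]

lemma pd_sum {ι : Type*} {s : Finset ι} {f : ι → (Fin n → ℝ) → E}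
    (hf : ∀ i ∈ s, DifferentiableAt ℝ (f i) x) :
    pd j (fun y => ∑ i ∈ s, f i y) x = ∑ i ∈ s, pd j (f i) x := by
  simp [pd, fderiv_fun_sum hf]

lemma pd_const_mul {𝔸 : Type*} [NormedRing 𝔸] [NormedAlgebra ℝ 𝔸] {f : (Fin n → ℝ) → 𝔸}
    (hf : DifferentiableAt ℝ f x) (c : 𝔸) : pd j (fun y => c * f y) x = c * pd j f x := by
  simp [pd, fderiv_const_mul hf c]

lemma pd_mul {𝔸 : Type*} [NormedCommRing 𝔸] [NormedAlgebra ℝ 𝔸] {f g : (Fin n → ℝ) → 𝔸}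
    (hf : DifferentiableAt ℝ f x) (hg : DifferentiableAt ℝ g x) :
    pd j (fun y => f y * g y) x = f x * pd j g x + g x * pd j f x := by
  simp [pd, fderiv_fun_mul hf hg]

lemma pd_clm (L : E →L[ℝ] F) {f : (Fin n → ℝ) → E} (hf : DifferentiableAt ℝ f x) :
    pd j (fun y => L (f y)) x = L (pd j f x) := by
  have h : fderiv ℝ (fun y => L (f y)) x = L.comp (fderiv ℝ f x) :=
    (L.hasFDerivAt.comp x hf.hasFDerivAt).fderiv
  simp [pd, h]

lemma pd_ofReal {f : (Fin n → ℝ) → ℝ} (hf : DifferentiableAt ℝ f x) :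
    pd j (fun y => (f y : ℂ)) x = pd j f x :=
  pd_clm ofRealCLM hf

lemma pd_rpair {f g : (Fin n → ℝ) → ℂ} (hf : DifferentiableAt ℝ f x)
    (hg : DifferentiableAt ℝ g x) :
    pd j (fun y => rpair (f y) (g y)) x = rpair (pd j f x) (g x) + rpair (f x) (pd j g x) := by
  have hg' : DifferentiableAt ℝ (fun y => conj (g y)) x := conjCLE.differentiableAt.comp x hg
  have hconj : pd j (fun y => conj (g y)) x = conj (pd j g x) :=
    pd_clm conjCLE.toContinuousLinearMap hg
  simp only [rpair]
  have hre := pd_clm (j := j) reCLM (hf.fun_mul hg')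
  simp only [reCLM_apply] at hre
  rw [hre, pd_mul hf hg', hconj, add_re, add_comm, mul_comm (conj (g x))]

lemma DifferentiableAt.rpair {f g : (Fin n → ℝ) → ℂ} (hf : DifferentiableAt ℝ f x)
    (hg : DifferentiableAt ℝ g x) : DifferentiableAt ℝ (fun y => rpair (f y) (g y)) x :=
  reCLM.differentiableAt.comp x (hf.fun_mul (conjCLE.differentiableAt.comp x hg))

lemma ContDiffAt.eventually_differentiableAt {f : (Fin n → ℝ) → E} (hf : ContDiffAt ℝ 2 f x) :
    ∀ᶠ y in 𝓝 x, DifferentiableAt ℝ f y :=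
  (hf.eventually (by simp)).mono fun _ hy => hy.differentiableAt (by norm_num)

lemma ContDiffAt.differentiableAt_pd {f : (Fin n → ℝ) → E} (hf : ContDiffAt ℝ 2 f x)
    (j : Fin n) : DifferentiableAt ℝ (pd j f) x :=
  ((hf.fderiv_right (m := 1) le_rfl).differentiableAt one_ne_zero).clm_apply
    (differentiableAt_const _)

lemma pd_pd_comm {f : (Fin n → ℝ) → E} (hf : ContDiffAt ℝ 2 f x) (a b : Fin n) :
    pd a (pd b f) x = pd b (pd a f) x := by
  have hdf : DifferentiableAt ℝ (fderiv ℝ f) x :=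
    (hf.fderiv_right (m := 1) le_rfl).differentiableAt one_ne_zero
  have hsnd (a b : Fin n) :
      pd a (pd b f) x = fderiv ℝ (fderiv ℝ f) x (Pi.single a 1) (Pi.single b 1) :=
    pd_clm (ContinuousLinearMap.apply ℝ E (Pi.single b 1)) hdf
  rw [hsnd, hsnd, hf.isSymmSndFDerivAt (by simp [minSmoothness_of_isRCLikeNormedField])]

lemma pd_pd_add_mul {f g : (Fin n → ℝ) → ℝ} (hf : ContDiffAt ℝ 2 f x) (hg : ContDiffAt ℝ 2 g x)
    (s : ℝ) (a b : Fin n) :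
    pd a (pd b (fun w => f w + s * g w)) x = pd a (pd b f) x + s * pd a (pd b g) x := by
  have hlin : pd b (fun w => f w + s * g w) =ᶠ[𝓝 x] fun y => pd b f y + s * pd b g y := by
    filter_upwards [hf.eventually_differentiableAt, hg.eventually_differentiableAt]
      with y hfy hgy
    rw [pd_add hfy (hgy.const_mul s), pd_const_mul hgy]
  rw [pd_congr hlin, pd_add (hf.differentiableAt_pd b) ((hg.differentiableAt_pd b).const_mul s),
    pd_const_mul (hg.differentiableAt_pd b)]

variable {A ω : (Fin n → ℝ) → Fin n → ℝ} {u φ v : (Fin n → ℝ) → ℂ}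

lemma covD_congr (h : u =ᶠ[𝓝 x] v) : covD j A u x = covD j A v x := by
  simp only [covD, pd_congr h, h.eq_of_nhds]

lemma covD_add_mul_potential (s : ℝ) (y : Fin n → ℝ) :
    covD j (fun y i => A y i + s * ω y i) v y = covD j A v y - s * (I * ω y j * v y) := by
  simp only [covD]
  push_cast
  ring

lemma covD_add_mul {y : Fin n → ℝ} (hu : DifferentiableAt ℝ u y) (hv : DifferentiableAt ℝ v y)
    (c : ℂ) : covD j A (fun y => u y + c * v y) y = covD j A u y + c * covD j A v y := by
  simp only [covD]
  rw [pd_add hu (hv.const_mul c), pd_const_mul hv]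
  ring

lemma covD_ofReal_mul {a : (Fin n → ℝ) → ℝ} (ha : DifferentiableAt ℝ a x)
    (hv : DifferentiableAt ℝ v x) :
    covD j A (fun y => (a y : ℂ) * v y) x = pd j a x * v x + a x * covD j A v x := by
  have ha' : DifferentiableAt ℝ (fun y => (a y : ℂ)) x := ofRealCLM.differentiableAt.comp x ha
  simp only [covD]
  rw [pd_mul ha' hv, pd_ofReal ha]
  ring

lemma differentiableAt_covD (hA : DifferentiableAt ℝ A x) (hu : ContDiffAt ℝ 2 u x) :
    DifferentiableAt ℝ (covD j A u) x := by
  have hAj : DifferentiableAt ℝ (fun y => (A y j : ℂ)) x :=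
    ofRealCLM.differentiableAt.comp x (differentiableAt_pi.1 hA j)
  exact (hu.differentiableAt_pd j).sub
    ((hAj.const_mul I).mul (hu.differentiableAt (by norm_num)))

lemma hasDerivAt_zero_of_eq_add_smul {f g : ℝ → E} (hf : ∀ s, f s = f 0 + s • g s)
    (hg : ContinuousAt g 0) : HasDerivAt f (g 0) 0 := by
  rw [hasDerivAt_iff_tendsto_slope]
  refine (hg.mono_left nhdsWithin_le_nhds).congr' ?_
  filter_upwards [self_mem_nhdsWithin] with s (hs : s ≠ 0)
  rw [slope_def_module, hf s, add_sub_cancel_left, sub_zero, smul_smul, inv_mul_cancel₀ hs,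
    one_smul]

lemma HasDerivAt.rpair {f g : ℝ → ℂ} {f' g' : ℂ} {t : ℝ} (hf : HasDerivAt f f' t)
    (hg : HasDerivAt g g' t) :
    HasDerivAt (fun s => rpair (f s) (g s)) (rpair f' (g t) + rpair (f t) g') t := by
  have h := reCLM.hasFDerivAt.comp_hasDerivAt t (hf.fun_mul hg.star)
  refine h.congr_deriv ?_
  simp only [reCLM_apply, add_re, star_def]
  rfl

lemma hasDerivAt_add_mul (a b : ℂ) : HasDerivAt (fun s : ℝ => a + s * b) b 0 := by
  simpa using ((hasDerivAt_id (0 : ℝ)).ofReal_comp.mul_const b).const_add a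

lemma hasDerivAt_normSq_add_mul (a b : ℂ) :
    HasDerivAt (fun s : ℝ => normSq (a + s * b)) (2 * rpair b a) 0 := by
  refine (hasDerivAt_zero_of_eq_add_smul (g := fun s => 2 * rpair b a + s * normSq b)
    (fun s => ?_) (by fun_prop)).congr_deriv (by simp)
  simp [normSq_apply, rpair]
  ring

lemma covD_perturb {y : Fin n → ℝ} (hu : DifferentiableAt ℝ u y) (hφ : DifferentiableAt ℝ φ y)
    (s : ℝ) :
    covD j (fun y i => A y i + s * ω y i) (fun y => u y + s * φ y) y
      = covD j A u y + s * (covD j A φ y - I * ω y j * (u y + s * φ y)) := by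
  rw [covD_add_mul_potential, covD_add_mul hu hφ]
  ring

lemma hasDerivAt_covD_perturb {y : Fin n → ℝ} (hu : DifferentiableAt ℝ u y)
    (hφ : DifferentiableAt ℝ φ y) :
    HasDerivAt (fun s : ℝ => covD j (fun y i => A y i + s * ω y i) (fun y => u y + s * φ y) y)
      (covD j A φ y - I * ω y j * u y) 0 := by
  refine (hasDerivAt_zero_of_eq_add_smul
    (g := fun s : ℝ => covD j A φ y - I * ω y j * (u y + s * φ y))
    (fun s => ?_) (by fun_prop)).congr_deriv (by simp)
  simp [covD_perturb hu hφ, real_smul]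

lemma covD_covD_perturb (hu : ContDiffAt ℝ 2 u x) (hφ : ContDiffAt ℝ 2 φ x)
    (hA : DifferentiableAt ℝ A x) (hω : DifferentiableAt ℝ ω x) (s : ℝ) :
    covD j (fun y i => A y i + s * ω y i)
        (covD j (fun y i => A y i + s * ω y i) (fun y => u y + s * φ y)) x
      = covD j A (covD j A u) x + s * (covD j A (covD j A φ) x
          - I * (pd j (fun y => ω y j) x * (u x + s * φ x)
            + ω x j * (covD j A u x + s * covD j A φ x))
          - I * ω x j * covD j (fun y i => A y i + s * ω y i) (fun y => u y + s * φ y) x) := by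
  have hu1 := hu.differentiableAt (by norm_num)
  have hφ1 := hφ.differentiableAt (by norm_num)
  have hωj := differentiableAt_pi.1 hω j
  have hexpand : covD j (fun y i => A y i + s * ω y i) (fun y => u y + s * φ y) =ᶠ[𝓝 x]
      fun y => (covD j A u y + s * covD j A φ y)
        + (-s * I) * ((ω y j : ℂ) * (u y + s * φ y)) := by
    filter_upwards [hu.eventually_differentiableAt, hφ.eventually_differentiableAt]
      with y huy hφy
    rw [covD_perturb huy hφy]
    ring
  have hus : DifferentiableAt ℝ (fun y => u y + s * φ y) x := hu1.fun_add (hφ1.const_mul _)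
  have hω' : DifferentiableAt ℝ (fun y => (ω y j : ℂ)) x := ofRealCLM.differentiableAt.comp x hωj
  rw [covD_add_mul_potential, covD_congr hexpand,
    covD_add_mul ((differentiableAt_covD hA hu).fun_add
      ((differentiableAt_covD hA hφ).const_mul _)) (hω'.fun_mul hus),
    covD_add_mul (differentiableAt_covD hA hu) (differentiableAt_covD hA hφ),
    covD_ofReal_mul hωj hus, covD_add_mul hu1 hφ1]
  ring

lemma hasDerivAt_covD_covD_perturb (hu : ContDiffAt ℝ 2 u x) (hφ : ContDiffAt ℝ 2 φ x)
    (hA : DifferentiableAt ℝ A x) (hω : DifferentiableAt ℝ ω x) :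
    HasDerivAt (fun s : ℝ => covD j (fun y i => A y i + s * ω y i)
        (covD j (fun y i => A y i + s * ω y i) (fun y => u y + s * φ y)) x)
      (covD j A (covD j A φ) x - I * u x * pd j (fun y => ω y j) x
        - 2 * I * (covD j A u x * ω x j)) 0 := by
  have hD := (hasDerivAt_covD_perturb (j := j) (A := A) (ω := ω)
    (hu.differentiableAt (by norm_num)) (hφ.differentiableAt (by norm_num))).continuousAt
  refine (hasDerivAt_zero_of_eq_add_smul
    (g := fun s : ℝ => covD j A (covD j A φ) x
          - I * (pd j (fun y => ω y j) x * (u x + s * φ x)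
            + ω x j * (covD j A u x + s * covD j A φ x))
          - I * ω x j * covD j (fun y i => A y i + s * ω y i) (fun y => u y + s * φ y) x)
    (fun s => ?_) (by fun_prop)).congr_deriv ?_
  · simp [covD_covD_perturb hu hφ hA hω, real_smul]
  · simp
    ring

lemma normSq_mul_eq_rpair_mul_add (a b : ℂ) :
    (normSq a : ℂ) * b = rpair b a * a + rpair b (I * a) * (I * a) := by
  apply Complex.ext <;> simp [rpair, normSq_apply] <;> ring

lemma pd_thetaStar (ε : ℝ) (hu : DifferentiableAt ℝ u x) (hφ : DifferentiableAt ℝ φ x)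
    (hω : ContDiffAt ℝ 2 ω x) (k : Fin n) :
    pd k (thetaStar ε u φ ω) x
      = -ε ^ 2 * ∑ j, pd k (pd j (fun w => ω w j)) x
        + (rpair (pd k φ x) (I * u x) + rpair (φ x) (I * pd k u x)) := by
  have hdiv : ∀ j ∈ Finset.univ, DifferentiableAt ℝ (pd j (fun w => ω w j)) x :=
    fun j _ => (contDiffAt_pi.1 hω j).differentiableAt_pd j
  have hIu : DifferentiableAt ℝ (fun y => I * u y) x := hu.const_mul I
  change pd k (fun y => -ε ^ 2 * ∑ j, pd j (fun w => ω w j) y + rpair (φ y) (I * u y)) x = _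
  have hsum := DifferentiableAt.fun_sum hdiv
  rw [pd_add (hsum.const_mul _) (hφ.rpair hIu), pd_const_mul hsum, pd_sum hdiv,
    pd_rpair hφ hIu, pd_const_mul hu]

lemma pd_curl_perturb (hA : ContDiffAt ℝ 2 A x) (hω : ContDiffAt ℝ 2 ω x) (s : ℝ) (j k : Fin n) :
    pd j (fun y => pd j (fun w => A w k + s * ω w k) y - pd k (fun w => A w j + s * ω w j) y) x
      = pd j (pd j (fun w => A w k)) x - pd j (pd k (fun w => A w j)) x
        + s * (pd j (pd j (fun w => ω w k)) x - pd j (pd k (fun w => ω w j)) x) := by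
  have hA' := contDiffAt_pi.1 hA
  have hω' := contDiffAt_pi.1 hω
  have hAs (i : Fin n) : ContDiffAt ℝ 2 (fun w => A w i + s * ω w i) x :=
    (hA' i).add (contDiffAt_const.mul (hω' i))
  rw [pd_sub ((hAs k).differentiableAt_pd j) ((hAs j).differentiableAt_pd k),
    pd_pd_add_mul (hA' k) (hω' k), pd_pd_add_mul (hA' j) (hω' j)]
  ring

lemma hasDerivAt_GL1_perturb (ε : ℝ) (hu : ContDiffAt ℝ 2 u x) (hφ : ContDiffAt ℝ 2 φ x)
    (hA : DifferentiableAt ℝ A x) (hω : DifferentiableAt ℝ ω x) :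
    HasDerivAt (fun s : ℝ => GL1 ε (fun y => u y + s * φ y) (fun y j => A y j + s * ω y j) x)
      (-(ε : ℂ) ^ 2 * ∑ j, (covD j A (covD j A φ) x - I * u x * pd j (fun y => ω y j) x
          - 2 * I * (covD j A u x * ω x j))
        - (1 / 2 * ((-(2 * rpair (φ x) (u x)) : ℝ) : ℂ) * u x
          + 1 / 2 * ((1 - normSq (u x) : ℝ) : ℂ) * φ x)) 0 := by
  have hpot := ((((hasDerivAt_normSq_add_mul (u x) (φ x)).const_sub 1).ofReal_comp).const_mul
    (1 / 2 : ℂ)).fun_mul (hasDerivAt_add_mul (u x) (φ x))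
  have hkin := (HasDerivAt.fun_sum fun j (_ : j ∈ Finset.univ) =>
    hasDerivAt_covD_covD_perturb (j := j) hu hφ hA hω).const_mul (-(ε : ℂ) ^ 2)
  exact (hkin.fun_sub hpot).congr_deriv (by simp)

lemma hasDerivAt_GL2_perturb (ε : ℝ) (hu : DifferentiableAt ℝ u x) (hφ : DifferentiableAt ℝ φ x)
    (hA : ContDiffAt ℝ 2 A x) (hω : ContDiffAt ℝ 2 ω x) (k : Fin n) :
    HasDerivAt (fun s : ℝ => GL2 ε (fun y => u y + s * φ y) (fun y j => A y j + s * ω y j) x k)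
      (-ε ^ 2 * ∑ j, (pd j (pd j (fun w => ω w k)) x - pd j (pd k (fun w => ω w j)) x)
        - (rpair (covD k A φ x - I * ω x k * u x) (I * u x) + rpair (covD k A u x) (I * φ x)))
      0 := by
  have hcurl (j : Fin n) (_ : j ∈ Finset.univ) := hasDerivAt_zero_of_eq_add_smul
    (f := fun s : ℝ =>
      pd j (fun y => pd j (fun w => A w k + s * ω w k) y - pd k (fun w => A w j + s * ω w j) y) x)
    (g := fun _ => pd j (pd j (fun w => ω w k)) x - pd j (pd k (fun w => ω w j)) x)
    (fun s => by rw [pd_curl_perturb hA hω s, pd_curl_perturb hA hω 0]; simp)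
    continuousAt_const
  have hcurrent := (hasDerivAt_covD_perturb (j := k) (A := A) (ω := ω) hu hφ).rpair
    ((hasDerivAt_add_mul (u x) (φ x)).const_mul I)
  exact (((HasDerivAt.fun_sum hcurl).const_mul (-ε ^ 2)).fun_sub hcurrent).congr_deriv (by simp)

end

theorem statement5_general {n : ℕ} (Ω : Set (Fin n → ℝ)) (hΩ : IsOpen Ω) (ε : ℝ)
    (u φ : (Fin n → ℝ) → ℂ) (A ω : (Fin n → ℝ) → Fin n → ℝ)
    (hu : ContDiffOn ℝ 2 u Ω) (hφ : ContDiffOn ℝ 2 φ Ω)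
    (hA : ContDiffOn ℝ 2 A Ω) (hω : ContDiffOn ℝ 2 ω Ω) :
    ∀ x ∈ Ω,
      -- first (complex) component of the Gateaux derivative of S_ε at (u,A) in direction (φ,ω)
      (deriv (fun s : ℝ =>
          GL1 ε (fun y => u y + (s : ℂ) * φ y) (fun y j => A y j + s * ω y j) x) 0
        = (-(ε : ℂ) ^ 2 * ∑ j : Fin n, covD j A (covD j A φ) x
            - (1 / 2 : ℂ) * ((1 - 3 * Complex.normSq (u x) : ℝ) : ℂ) * φ x
            + 2 * Complex.I * (ε : ℂ) ^ 2 * ∑ j : Fin n, covD j A u x * ((ω x j : ℝ) : ℂ))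
          - Complex.I * u x * ((thetaStar ε u φ ω x : ℝ) : ℂ)) ∧
      -- second (1-form) component of the Gateaux derivative
      (∀ k : Fin n,
        deriv (fun s : ℝ =>
            GL2 ε (fun y => u y + (s : ℂ) * φ y) (fun y j => A y j + s * ω y j) x k) 0
          = (-ε ^ 2 * ∑ j : Fin n, pd j (fun y => pd j (fun w => ω w k) y) x
              + Complex.normSq (u x) * ω x k
              + 2 * rpair (Complex.I * covD k A u x) (φ x))
            - pd k (thetaStar ε u φ ω) x) := by
  intro x hx
  have hux := hu.contDiffAt (hΩ.mem_nhds hx)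
  have hφx := hφ.contDiffAt (hΩ.mem_nhds hx)
  have hAx := hA.contDiffAt (hΩ.mem_nhds hx)
  have hωx := hω.contDiffAt (hΩ.mem_nhds hx)
  have hu1 := hux.differentiableAt (by norm_num)
  have hφ1 := hφx.differentiableAt (by norm_num)
  constructor
  · rw [(hasDerivAt_GL1_perturb ε hux hφx (hAx.differentiableAt (by norm_num))
      (hωx.differentiableAt (by norm_num))).deriv, Finset.sum_sub_distrib,
      Finset.sum_sub_distrib, ← Finset.mul_sum, ← Finset.mul_sum, thetaStar]
    push_cast
    linear_combination -normSq_mul_eq_rpair_mul_add (u x) (φ x)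
  · intro k
    rw [(hasDerivAt_GL2_perturb ε hu1 hφ1 hAx hωx k).deriv, pd_thetaStar ε hu1 hφ1 hωx,
      Finset.sum_sub_distrib,
      Finset.sum_congr rfl fun j _ => pd_pd_comm (contDiffAt_pi.1 hωx j) j k]
    simp [covD, rpair, normSq_apply]
    ring

theorem statement5 {n : ℕ} (Ω : Set (Fin n → ℝ)) (hΩ : IsOpen Ω) (ε : ℝ) (hε : 0 < ε)
    (u φ : (Fin n → ℝ) → ℂ) (A ω : (Fin n → ℝ) → Fin n → ℝ)
    (hu : ContDiffOn ℝ 2 u Ω) (hφ : ContDiffOn ℝ 2 φ Ω)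
    (hA : ContDiffOn ℝ 2 A Ω) (hω : ContDiffOn ℝ 2 ω Ω) :
    ∀ x ∈ Ω,
      -- first (complex) component of the Gateaux derivative of S_ε at (u,A) in direction (φ,ω)
      (deriv (fun s : ℝ =>
          GL1 ε (fun y => u y + (s : ℂ) * φ y) (fun y j => A y j + s * ω y j) x) 0
        = (-(ε : ℂ) ^ 2 * ∑ j : Fin n, covD j A (covD j A φ) x
            - (1 / 2 : ℂ) * ((1 - 3 * Complex.normSq (u x) : ℝ) : ℂ) * φ x
            + 2 * Complex.I * (ε : ℂ) ^ 2 * ∑ j : Fin n, covD j A u x * ((ω x j : ℝ) : ℂ))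
          - Complex.I * u x * ((thetaStar ε u φ ω x : ℝ) : ℂ)) ∧
      -- second (1-form) component of the Gateaux derivative
      (∀ k : Fin n,
        deriv (fun s : ℝ =>
            GL2 ε (fun y => u y + (s : ℂ) * φ y) (fun y j => A y j + s * ω y j) x k) 0
          = (-ε ^ 2 * ∑ j : Fin n, pd j (fun y => pd j (fun w => ω w k) y) x
              + Complex.normSq (u x) * ω x k
              + 2 * rpair (Complex.I * covD k A u x) (φ x))
            - pd k (thetaStar ε u φ ω) x) :=
  statement5_general Ω hΩ ε u φ A ω hu hφ hA hω

end
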